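/- Let S = Conv_{L⁰}{x_1,…,x_n} be an (n−1)-dimensional L⁰-simplex in L⁰(𝓕,ℝ^d) and 𝒮 = {S_1,…,S_I} an L⁰-simplicial subdivision of S. Then S = ⋃ { ∑_{i=1}^I 1_{B_i} S_i : (B_1,…,B_I) a measurable partition of Ω }; that is, x ∈ S if and only if there exist a measurable partition (B_1,…,B_I) of Ω and elements s_i ∈ S_i (i = 1,…,I) such that x = ∑_{i=1}^I 1_{B_i} s_i. -/

import Mathlib

open MeasureTheory Filter Set Topology

noncomputable section

namespace RandomBrouwer

variable {Ω : Type*} [MeasurableSpace Ω]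

/-- `ℝ^d` with the Euclidean norm. -/
abbrev Ed (d : ℕ) : Type := EuclideanSpace ℝ (Fin d)

/-- `L⁰(𝓕,ℝ^d)`: equivalence classes (mod a.e. equality) of measurable functions `Ω → ℝ^d`. -/
abbrev L0 (μ : Measure Ω) (d : ℕ) : Type _ := Ω →ₘ[μ] Ed d

/-- A countable measurable partition of `Ω`. -/
def IsPartition (A : ℕ → Set Ω) : Prop :=
  (∀ n, MeasurableSet (A n)) ∧ (Pairwise fun m n => Disjoint (A m) (A n)) ∧ (⋃ n, A n) = univ

/-- A finite measurable partition of `Ω`. -/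
def IsFinPartition {m : ℕ} (A : Fin m → Set Ω) : Prop :=
  (∀ i, MeasurableSet (A i)) ∧ (Pairwise fun i j => Disjoint (A i) (A j)) ∧ (⋃ i, A i) = univ

variable (μ : Measure Ω) (d : ℕ)

/-- `z = ∑ₙ 1_{A n} (v n)`: `z` is the countable concatenation of the sequence `v`
along the countable measurable partition `A`. -/
def IsConcat {β : Type*} [TopologicalSpace β] (A : ℕ → Set Ω) (v : ℕ → Ω →ₘ[μ] β)
    (z : Ω →ₘ[μ] β) : Prop :=
  ∀ n, ∀ᵐ ω ∂μ, ω ∈ A n → z ω = v n ω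

/-- `z = ∑ᵢ 1_{A i} (v i)` for a finite partition. -/
def IsFinConcat {β : Type*} [TopologicalSpace β] {m : ℕ} (A : Fin m → Set Ω)
    (v : Fin m → Ω →ₘ[μ] β) (z : Ω →ₘ[μ] β) : Prop :=
  ∀ i, ∀ᵐ ω ∂μ, ω ∈ A i → z ω = v i ω

/-- A σ-stable subset of `L⁰(𝓕,ℝ^d)`. -/
def SigmaStable (G : Set (L0 μ d)) : Prop :=
  ∀ A : ℕ → Set Ω, IsPartition A → ∀ v : ℕ → L0 μ d, (∀ n, v n ∈ G) →
    ∀ z : L0 μ d, IsConcat μ A v z → z ∈ G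

/-- A σ-stable map on `G` (with values classes of `β`-valued functions). -/
def SigmaStableMapOn {β : Type*} [TopologicalSpace β] (G : Set (L0 μ d))
    (f : L0 μ d → (Ω →ₘ[μ] β)) : Prop :=
  ∀ A : ℕ → Set Ω, IsPartition A → ∀ v : ℕ → L0 μ d, (∀ n, v n ∈ G) →
    ∀ z ∈ G, IsConcat μ A v z → IsConcat μ A (fun n => f (v n)) (f z)

/-- A local map on `G`. -/
def LocalOn (G : Set (L0 μ d)) (h : L0 μ d → L0 μ d) : Prop :=
  ∀ x ∈ G, ∀ y ∈ G, ∀ A : Set Ω, MeasurableSet A →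
    (∀ᵐ ω ∂μ, ω ∈ A → x ω = y ω) → ∀ᵐ ω ∂μ, ω ∈ A → h x ω = h y ω

/-- `G` is L⁰-convex. -/
def L0Convex (G : Set (L0 μ d)) : Prop :=
  ∀ x ∈ G, ∀ y ∈ G, ∀ lam : Ω → ℝ, Measurable lam → (∀ ω, lam ω ∈ Icc (0:ℝ) 1) →
    ∀ z : L0 μ d, (∀ᵐ ω ∂μ, z ω = lam ω • x ω + (1 - lam ω) • y ω) → z ∈ G

/-- `G` is a.s. bounded. -/
def ASBounded (G : Set (L0 μ d)) : Prop :=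
  ∃ r : Ω → ℝ, Measurable r ∧ (∀ ω, 0 ≤ r ω) ∧ ∀ x ∈ G, ∀ᵐ ω ∂μ, ‖x ω‖ ≤ r ω

/-- `G` is `𝒯_{ε,λ}`-closed, i.e. sequentially closed under convergence in probability. -/
def TelClosed (G : Set (L0 μ d)) : Prop :=
  ∀ x : ℕ → L0 μ d, (∀ n, x n ∈ G) → ∀ z : L0 μ d,
    TendstoInMeasure μ (fun n => ⇑(x n)) atTop ⇑z → z ∈ G

/-- `f` is continuous in probability (`𝒯_{ε,λ}`-continuous) on `G`. -/
def ContInProbOn (G : Set (L0 μ d)) (f : L0 μ d → L0 μ d) : Prop :=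
  ∀ x : ℕ → L0 μ d, (∀ n, x n ∈ G) → ∀ z ∈ G,
    TendstoInMeasure μ (fun n => ⇑(x n)) atTop ⇑z →
    TendstoInMeasure μ (fun n => ⇑(f (x n))) atTop ⇑(f z)

/-- `y` is a random subsequence of `v`. -/
def IsRandomSubseq (v : ℕ → L0 μ d) (y : ℕ → L0 μ d) : Prop :=
  ∃ nk : ℕ → Ω → ℕ, (∀ k, Measurable (nk k)) ∧ (∀ k ω, nk k ω < nk (k + 1) ω) ∧
    ∀ k, ∀ᵐ ω ∂μ, y k ω = v (nk k ω) ω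

/-- `f` is random sequentially continuous on the σ-stable set `G`. -/
def RandSeqContOn (G : Set (L0 μ d)) (f : L0 μ d → L0 μ d) : Prop :=
  ∀ v : ℕ → L0 μ d, (∀ k, v k ∈ G) → ∀ z ∈ G,
    TendstoInMeasure μ (fun k => ⇑(v k)) atTop ⇑z →
    ∃ y : ℕ → L0 μ d, (∀ k, y k ∈ G) ∧ IsRandomSubseq μ d v y ∧
      TendstoInMeasure μ (fun k => ⇑(f (y k))) atTop ⇑(f z)

/-- The locally L⁰-convex topology `𝒯_c` on `L⁰(𝓕,ℝ^d)`, generated by random open balls. -/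
def Tc : TopologicalSpace (L0 μ d) :=
  .generateFrom {B | ∃ (x : L0 μ d) (r : Ω → ℝ), Measurable r ∧ (∀ᵐ ω ∂μ, 0 < r ω) ∧
    B = {y : L0 μ d | ∀ᵐ ω ∂μ, ‖x ω - y ω‖ < r ω}}

/-- The L⁰-convex hull `Conv_{L⁰}{x i : i}` of finitely many elements of `L⁰(𝓕,ℝ^d)`. -/
def ConvL0 {ι : Type*} [Fintype ι] (x : ι → L0 μ d) : Set (L0 μ d) :=
  {z | ∃ lam : ι → Ω → ℝ, (∀ i, Measurable (lam i)) ∧ (∀ i ω, lam i ω ∈ Icc (0:ℝ) 1) ∧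
    (∀ ω, ∑ i, lam i ω = 1) ∧ ∀ᵐ ω ∂μ, z ω = ∑ i, lam i ω • x i ω}

/-- `x 0, …, x (n-1)` are L⁰-affinely independent. -/
def L0AffineIndep {n : ℕ} [NeZero n] (x : Fin n → L0 μ d) : Prop :=
  ∀ ξ : Fin n → Ω → ℝ, (∀ i, Measurable (ξ i)) →
    (∀ᵐ ω ∂μ, ∑ i ∈ Finset.univ.erase (0 : Fin n), ξ i ω • (x i ω - x 0 ω) = 0) →
    ∀ i, i ≠ (0 : Fin n) → ∀ᵐ ω ∂μ, ξ i ω = 0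

/-- The σ-stable hull of a set `H`. -/
def sigmaHull (H : Set (L0 μ d)) : Set (L0 μ d) :=
  {z | ∃ (A : ℕ → Set Ω) (v : ℕ → L0 μ d), IsPartition A ∧ (∀ k, v k ∈ H) ∧ IsConcat μ A v z}

/-- An L⁰-simplicial subdivision of the L⁰-simplex with vertices `x 0, …, x (n-1)`,
together with its counterpart simplicial subdivision. -/
structure L0Subdivision {n : ℕ} [NeZero n] (x : Fin n → L0 μ d) where
  I : ℕ
  hI : 0 < I
  T : Fin I → Fin n → L0 μ d
  indepL0 : ∀ i, L0AffineIndep μ d (T i)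
  cover : ConvL0 μ d x = sigmaHull μ d (⋃ i, ConvL0 μ d (T i))
  faces : ∀ i j, ConvL0 μ d (T i) ∩ ConvL0 μ d (T j) = ∅ ∨
    ∃ J1 J2 : Finset (Fin n), J1.Nonempty ∧ J2.Nonempty ∧
      ConvL0 μ d (T i) ∩ ConvL0 μ d (T j) = ConvL0 μ d (fun k : J1 => T i k) ∧
      ConvL0 μ d (T i) ∩ ConvL0 μ d (T j) = ConvL0 μ d (fun k : J2 => T j k)
  indepR : ∀ i, AffineIndependent ℝ (T i)
  cover' : convexHull ℝ (Set.range x) = ⋃ i, convexHull ℝ (Set.range (T i))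
  faces' : ∀ i j, convexHull ℝ (Set.range (T i)) ∩ convexHull ℝ (Set.range (T j)) = ∅ ∨
    ∃ J1 J2 : Finset (Fin n), J1.Nonempty ∧ J2.Nonempty ∧
      convexHull ℝ (Set.range (T i)) ∩ convexHull ℝ (Set.range (T j))
        = convexHull ℝ (T i '' J1) ∧
      convexHull ℝ (Set.range (T i)) ∩ convexHull ℝ (Set.range (T j))
        = convexHull ℝ (T j '' J2)

/-- The set of vertices `ext(𝒮')` of the counterpart subdivision. -/
def L0Subdivision.extVerts {n : ℕ} [NeZero n] {x : Fin n → L0 μ d}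
    (S : L0Subdivision μ d x) : Set (L0 μ d) :=
  ⋃ i, Set.range (S.T i)

/-- `φ` is a proper L⁰-labeling function on the domain `D` (w.r.t. the base vertices `x`),
with labels in `{1,…,n}` (label `i+1` corresponding to the vertex `x i`). -/
def ProperL0Label {n : ℕ} [NeZero n] (x : Fin n → L0 μ d) (D : Set (L0 μ d))
    (φ : L0 μ d → (Ω →ₘ[μ] ℕ)) : Prop :=
  ∀ y ∈ D, ∀ lam : Fin n → Ω → ℝ, (∀ i, Measurable (lam i)) →
    (∀ i ω, lam i ω ∈ Icc (0:ℝ) 1) → (∀ ω, ∑ i, lam i ω = 1) →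
    (∀ᵐ ω ∂μ, y ω = ∑ i, lam i ω • x i ω) →
    ∀ i : Fin n, ∀ᵐ ω ∂μ, ¬(φ y ω = (i : ℕ) + 1 ∧ lam i ω = 0)

/-- `ψ` is a (classical) proper labeling function on the vertex set `V` of the counterpart
subdivision, with labels in `{1,…,n}`. -/
def ProperLabelR {n : ℕ} [NeZero n] (x : Fin n → L0 μ d) (V : Set (L0 μ d))
    (ψ : L0 μ d → ℕ) : Prop :=
  ∀ y ∈ V, ∀ α : Fin n → ℝ, (∀ i, α i ∈ Icc (0:ℝ) 1) → (∑ i, α i = 1) →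
    (y = ∑ i, α i • x i) → ∃ i : Fin n, ψ y = (i : ℕ) + 1 ∧ 0 < α i

/-- `h` is an L⁰-extreme point of `S`. -/
def IsL0ExtremePoint (S : Set (L0 μ d)) (h : L0 μ d) : Prop :=
  h ∈ S ∧ ∀ x ∈ S, ∀ y ∈ S, ∀ lam : Ω → ℝ, Measurable lam →
    (∀ᵐ ω ∂μ, lam ω ∈ Ioo (0:ℝ) 1) →
    (∀ᵐ ω ∂μ, h ω = lam ω • x ω + (1 - lam ω) • y ω) → x = h ∧ y = h

/-!
An element of `S = sigmaHull (⋃ i, S_i)` is a countable concatenation of points `v k ∈ S_{c k}`.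
Grouping the pieces of the countable partition according to `c` gives a finite partition
`(B_i)`. Each `S_i` is σ-stable (barycentric weights can be patched measurably along a countable
partition), so the points with `c k = i`, padded by any point of `S_i`, glue to a single
`s_i ∈ S_i`. Conversely a finite concatenation is a countable one, and `S` is σ-stable and
contains each `S_i`.
-/

section Partition

variable {α : Type*} [MeasurableSpace α] {A : ℕ → Set α}

theorem IsPartition.exists_mem (hA : IsPartition A) (a : α) : ∃ n, a ∈ A n :=
  mem_iUnion.mp (hA.2.2 ▸ mem_univ a)

theorem IsPartition.exists_measurable_eqOn {β : Type*} [MeasurableSpace β] (hA : IsPartition A)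
    {g : ℕ → α → β} (hg : ∀ n, Measurable (g n)) :
    ∃ f : α → β, Measurable f ∧ ∀ n, EqOn f (g n) (A n) :=
  exists_measurable_piecewise A hA.1 g hg fun m n hmn => by
    dsimp only
    rw [(hA.2.1 hmn).inter_eq]
    exact eqOn_empty _ _

theorem IsPartition.exists_isConcat {μ : Measure α} {β : Type*} [TopologicalSpace β]
    [MeasurableSpace β] [BorelSpace β] [TopologicalSpace.PseudoMetrizableSpace β]
    [SecondCountableTopology β]
    (hA : IsPartition A) (v : ℕ → α →ₘ[μ] β) : ∃ z, IsConcat μ A v z := by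
  obtain ⟨f, hf, hfv⟩ := hA.exists_measurable_eqOn fun n => (v n).measurable
  refine ⟨AEEqFun.mk f hf.aestronglyMeasurable, fun n => ?_⟩
  filter_upwards [AEEqFun.coeFn_mk f hf.aestronglyMeasurable] with ω hω hωA
  rw [hω, hfv n hωA]

theorem IsPartition.isFinPartition_iUnion_fiber {m : ℕ} (hA : IsPartition A) (c : ℕ → Fin m) :
    IsFinPartition fun i => ⋃ (k) (_ : c k = i), A k := by
  refine ⟨fun i => .iUnion fun k => .iUnion fun _ => hA.1 k, fun i j hij => ?_, ?_⟩
  · refine Set.disjoint_left.mpr fun a hai haj => ?_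
    obtain ⟨k, rfl, hak⟩ := mem_iUnion₂.mp hai
    obtain ⟨l, rfl, hal⟩ := mem_iUnion₂.mp haj
    have hkl : k ≠ l := fun hkl => hij (hkl ▸ rfl)
    exact Set.disjoint_left.mp (hA.2.1 hkl) hak hal
  · refine eq_univ_of_forall fun a => ?_
    obtain ⟨k, hk⟩ := hA.exists_mem a
    exact mem_iUnion.mpr ⟨c k, mem_iUnion₂.mpr ⟨k, rfl, hk⟩⟩

theorem IsFinPartition.isPartition_extend {m : ℕ} {B : Fin m → Set α} (hB : IsFinPartition B) :
    IsPartition fun k => if h : k < m then B ⟨k, h⟩ else ∅ := by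
  refine ⟨fun k => ?_, fun k l hkl => ?_, eq_univ_of_forall fun a => ?_⟩
  · dsimp only
    split_ifs
    exacts [hB.1 _, .empty]
  · dsimp only
    split_ifs
    exacts [hB.2.1 fun h => hkl (Fin.mk.inj h), disjoint_empty _, empty_disjoint _,
      disjoint_empty _]
  · obtain ⟨i, hi⟩ := mem_iUnion.mp (hB.2.2 ▸ mem_univ a)
    exact mem_iUnion.mpr ⟨i, by simpa only [dif_pos i.isLt] using hi⟩

end Partition

section SigmaStable

variable {μ d}

theorem subset_sigmaHull (H : Set (L0 μ d)) : H ⊆ sigmaHull μ d H := fun s hs =>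
  ⟨fun n => {_ω | n = 0}, fun _ => s,
    ⟨fun _ => .const _,
      fun _ _ hmn => Set.disjoint_left.mpr fun _ h0 h0' => hmn (h0.trans h0'.symm),
      eq_univ_of_forall fun _ => mem_iUnion.mpr ⟨0, rfl⟩⟩,
    fun _ => hs, fun _ => ae_of_all _ fun _ _ => rfl⟩

theorem vertex_mem_convL0 {ι : Type*} [Fintype ι] [DecidableEq ι] (x : ι → L0 μ d) (i₀ : ι) :
    x i₀ ∈ ConvL0 μ d x := by
  refine ⟨fun i _ => if i = i₀ then 1 else 0, fun _ => measurable_const, fun i _ => ?_,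
    fun _ => by simp, ae_of_all _ fun _ => by simp [ite_smul]⟩
  dsimp only
  split_ifs <;> simp

theorem sigmaStable_convL0 {ι : Type*} [Fintype ι] (x : ι → L0 μ d) :
    SigmaStable μ d (ConvL0 μ d x) := by
  intro A hA v hv z hz
  choose lam hlam_meas hlam_Icc hlam_sum hv_eq using hv
  obtain ⟨Λ, hΛ_meas, hΛ⟩ := hA.exists_measurable_eqOn (g := fun n ω i => lam n i ω)
    fun n => measurable_pi_lambda _ (hlam_meas n)
  refine ⟨fun i ω => Λ ω i, fun i => (measurable_pi_apply i).comp hΛ_meas, fun i ω => ?_,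
    fun ω => ?_, ?_⟩
  · obtain ⟨n, hn⟩ := hA.exists_mem ω
    simpa only [hΛ n hn] using hlam_Icc n i ω
  · obtain ⟨n, hn⟩ := hA.exists_mem ω
    simpa only [hΛ n hn] using hlam_sum n ω
  · filter_upwards [ae_all_iff.mpr hz, ae_all_iff.mpr hv_eq] with ω hzω hvω
    obtain ⟨n, hn⟩ := hA.exists_mem ω
    rw [hzω n hn, hvω n, hΛ n hn]

theorem SigmaStable.mem_of_isFinConcat {G : Set (L0 μ d)} (hG : SigmaStable μ d G)
    (hne : G.Nonempty) {m : ℕ} {B : Fin m → Set Ω} (hB : IsFinPartition B)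
    {s : Fin m → L0 μ d} (hs : ∀ i, s i ∈ G) {z : L0 μ d} (hz : IsFinConcat μ B s z) :
    z ∈ G := by
  obtain ⟨g, hg⟩ := hne
  refine hG _ hB.isPartition_extend (fun k => if h : k < m then s ⟨k, h⟩ else g) (fun k => ?_) z
    fun k => ?_
  · split_ifs
    exacts [hs _, hg]
  · by_cases h : k < m
    · simpa only [dif_pos h] using hz ⟨k, h⟩
    · simp only [dif_neg h]
      exact ae_of_all _ fun _ hω => absurd hω (notMem_empty _)

theorem exists_isFinConcat_of_mem_sigmaHull_iUnion {m : ℕ} {G : Fin m → Set (L0 μ d)}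
    (hG : ∀ i, SigmaStable μ d (G i)) (hne : ∀ i, (G i).Nonempty) {z : L0 μ d}
    (hz : z ∈ sigmaHull μ d (⋃ i, G i)) :
    ∃ B : Fin m → Set Ω, IsFinPartition B ∧
      ∃ s : Fin m → L0 μ d, (∀ i, s i ∈ G i) ∧ IsFinConcat μ B s z := by
  obtain ⟨A, v, hA, hv, hz⟩ := hz
  choose c hc using fun k => mem_iUnion.mp (hv k)
  choose g hg using hne
  choose s hs using fun i => hA.exists_isConcat fun k => if c k = i then v k else g i
  refine ⟨_, hA.isFinPartition_iUnion_fiber c, s, fun i => hG i A hA _ (fun k => ?_) _ (hs i),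
    fun i => ?_⟩
  · split_ifs with h
    exacts [h ▸ hc k, hg i]
  · filter_upwards [ae_all_iff.mpr hz, ae_all_iff.mpr (hs i)] with ω hzω hsω hω
    obtain ⟨k, rfl, hk⟩ := mem_iUnion₂.mp hω
    rw [hzω k hk, hsω k hk, if_pos rfl]

end SigmaStable

theorem simplex_eq_union_of_finConcats_general {Ω : Type*} [MeasurableSpace Ω] (μ : Measure Ω)
    (d : ℕ) (n : ℕ) [NeZero n]
    (x : Fin n → L0 μ d)
    (𝒮 : L0Subdivision μ d x) (z : L0 μ d) :
    z ∈ ConvL0 μ d x ↔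
      ∃ B : Fin 𝒮.I → Set Ω, IsFinPartition B ∧
        ∃ s : Fin 𝒮.I → L0 μ d, (∀ i, s i ∈ ConvL0 μ d (𝒮.T i)) ∧
          ∀ i, ∀ᵐ ω ∂μ, ω ∈ B i → z ω = s i ω := by
  constructor
  · intro hz
    rw [𝒮.cover] at hz
    exact exists_isFinConcat_of_mem_sigmaHull_iUnion (fun _ => sigmaStable_convL0 _)
      (fun _ => ⟨_, vertex_mem_convL0 _ 0⟩) hz
  · rintro ⟨B, hB, s, hs, hz⟩
    have hs_conv : ∀ i, s i ∈ ConvL0 μ d x := fun i => by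
      rw [𝒮.cover]
      exact subset_sigmaHull _ (mem_iUnion_of_mem i (hs i))
    exact (sigmaStable_convL0 x).mem_of_isFinConcat ⟨_, vertex_mem_convL0 x 0⟩ hB hs_conv hz

/-- An L⁰-simplex is the union of the finite concatenations of the members
of any of its L⁰-simplicial subdivisions. -/
theorem simplex_eq_union_of_finConcats {Ω : Type*} [MeasurableSpace Ω] (μ : Measure Ω)
    [IsProbabilityMeasure μ] (d : ℕ) (hd : 0 < d) (n : ℕ) [NeZero n]
    (x : Fin n → L0 μ d) (hx : L0AffineIndep μ d x)
    (𝒮 : L0Subdivision μ d x) (z : L0 μ d) :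
    z ∈ ConvL0 μ d x ↔
      ∃ B : Fin 𝒮.I → Set Ω, IsFinPartition B ∧
        ∃ s : Fin 𝒮.I → L0 μ d, (∀ i, s i ∈ ConvL0 μ d (𝒮.T i)) ∧
          ∀ i, ∀ᵐ ω ∂μ, ω ∈ B i → z ω = s i ω :=
  simplex_eq_union_of_finConcats_general μ d n x 𝒮 z

end RandomBrouwer
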